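/- Let γ, σ² : [0,1] → ℝ be continuous with σ²(u) > 0 for all u ∈ [0,1] (condition (UE)), let Γ(u) := ∫₀^u γ(v) dv, g := ∫₀¹ γ(v) dv, assume (E1): Γ(u) − g·u > 0 for all u ∈ (0,1), let Ψ(u) := ∫_{1/2}^u σ²(v)/(2(Γ(v) − g·v)) dv, and let p_c := 2(g − γ(1))/σ²(1). If p_c > 0, then for every p with 0 ≤ p < p_c one has Z̄^p := ∫₀¹ exp(p·Ψ(u)) du < +∞. -/

import Mathlib

open MeasureTheory Set Filter Topology

/-- `Γ(u) = ∫₀^u γ(v) dv`. -/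
noncomputable def Gam (γ : ℝ → ℝ) (u : ℝ) : ℝ := ∫ v in (0:ℝ)..u, γ v

/-- market mean growth rate `g = ∫₀¹ γ(v) dv`. -/
noncomputable def mg (γ : ℝ → ℝ) : ℝ := ∫ v in (0:ℝ)..1, γ v

/-- `Ψ(u) = ∫_{1/2}^u σ²(v) / (2 (Γ(v) - g v)) dv`. -/
noncomputable def Psi (γ σ2 : ℝ → ℝ) (u : ℝ) : ℝ :=
  ∫ v in (1/2:ℝ)..u, σ2 v / (2 * (Gam γ v - mg γ * v))

/-- critical diversity index `p_c = 2 (g - γ(1)) / σ²(1)`. -/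
noncomputable def pcrit (γ σ2 : ℝ → ℝ) : ℝ := 2 * (mg γ - γ 1) / σ2 1

/-- critical index `q_c = 2 (γ(0) - g) / σ²(0)`. -/
noncomputable def qcrit (γ σ2 : ℝ → ℝ) : ℝ := 2 * (γ 0 - mg γ) / σ2 0

/-! The density `σ²(v) / (2 (Γ(v) - g v))` of `Ψ` is positive on `(0,1)`, so `Ψ` is
increasing and only the endpoint `1` matters. There `Γ(v) - g v = ∫_v^1 (g - γ)`, which is at
least `(g - γ(1) - t)(1 - v)` near `1`, so `p Ψ' ≤ β / (1 - v)` with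
`β = p (σ²(1) + t) / (2 (g - γ(1) - t))`; and `β < 1` for small `t > 0` exactly because
`p < p_c`. Integrating, `exp (p Ψ(u)) ≤ C (1 - u)^(-β)`, which is integrable on `(0,1)`. -/

open Real

theorem integral_inv_one_sub {a u : ℝ} (hau : a ≤ u) (hu : u < 1) :
    ∫ v in a..u, (1 - v)⁻¹ = log (1 - a) - log (1 - u) := by
  have h0 : (0 : ℝ) ∉ uIcc (1 - u) (1 - a) := by
    rw [uIcc_of_le (by linarith)]
    exact fun h => absurd h.1 (by linarith)
  rw [intervalIntegral.integral_comp_sub_left (fun x => x⁻¹), integral_inv h0,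
    log_div (by linarith) (by linarith)]

theorem integral_le_neg_mul_log_one_sub {h : ℝ → ℝ} {a u β : ℝ} (ha : 0 ≤ a)
    (hau : a ≤ u) (hu : u < 1) (hβ : 0 ≤ β) (hh : IntervalIntegrable h volume a u)
    (hle : ∀ v ∈ Icc a u, h v ≤ β * (1 - v)⁻¹) :
    ∫ v in a..u, h v ≤ -(β * log (1 - u)) := by
  have hinv : IntervalIntegrable (fun v => β * (1 - v)⁻¹) volume a u := by
    refine (continuousOn_const.mul ((continuous_const.sub continuous_id).continuousOn.inv₀
      fun v hv => ?_)).intervalIntegrable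
    rw [uIcc_of_le hau] at hv
    exact (sub_pos.mpr (hv.2.trans_lt hu)).ne'
  have hlog : log (1 - a) ≤ 0 := log_nonpos (by linarith) (by linarith)
  calc ∫ v in a..u, h v ≤ ∫ v in a..u, β * (1 - v)⁻¹ :=
        intervalIntegral.integral_mono_on hau hh hinv hle
    _ = β * (log (1 - a) - log (1 - u)) := by
        rw [intervalIntegral.integral_const_mul, integral_inv_one_sub hau hu]
    _ ≤ -(β * log (1 - u)) := by nlinarith

theorem lintegral_exp_lt_top_of_le_sub_mul_log {F : ℝ → ℝ} {C β : ℝ} (hβ : β < 1)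
    (hF : ∀ u ∈ Ioo (0 : ℝ) 1, F u ≤ C - β * log (1 - u)) :
    ∫⁻ u in Ioo (0 : ℝ) 1, ENNReal.ofReal (exp (F u)) < ⊤ := by
  have hbound : ∀ u ∈ Ioo (0 : ℝ) 1, exp (F u) ≤ exp C * (1 - u) ^ (-β) := fun u hu => by
    rw [rpow_def_of_pos (by linarith [hu.2]), ← exp_add]
    exact exp_le_exp.mpr (by linarith [hF u hu])
  have hint : IntegrableOn (fun u : ℝ => exp C * (1 - u) ^ (-β)) (Ioo 0 1) := by
    have h := ((intervalIntegral.intervalIntegrable_rpow' (a := 0) (b := 1) (r := -β)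
      (by linarith)).comp_sub_left 1).symm.const_mul (exp C)
    simp only [sub_zero, sub_self] at h
    exact (intervalIntegrable_iff_integrableOn_Ioo_of_le zero_le_one).mp h
  calc ∫⁻ u in Ioo (0 : ℝ) 1, ENNReal.ofReal (exp (F u))
      ≤ ∫⁻ u in Ioo (0 : ℝ) 1, ENNReal.ofReal (exp C * (1 - u) ^ (-β)) :=
        setLIntegral_mono (by fun_prop) fun u hu => ENNReal.ofReal_le_ofReal (hbound u hu)
    _ < ⊤ := hint.setLIntegral_lt_top

theorem eventually_nhdsLE_lt_of_continuousOn {f : ℝ → ℝ} {a b s : ℝ} (hab : a < b)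
    (hf : ContinuousOn f (Icc a b)) (hs : f b < s) : ∀ᶠ v in 𝓝[≤] b, f v < s := by
  rw [← nhdsWithin_Icc_eq_nhdsLE hab]
  exact (hf.continuousWithinAt (right_mem_Icc.mpr hab.le)).eventually
    (eventually_lt_nhds hs)

theorem continuousOn_Gam {γ : ℝ → ℝ} (hγ : ContinuousOn γ (Icc 0 1)) :
    ContinuousOn (Gam γ) (Icc 0 1) := by
  have h := intervalIntegral.continuousOn_primitive_interval (a := (0 : ℝ)) (b := 1)
    (μ := volume) (f := γ) (by rw [uIcc_of_le zero_le_one]; exact hγ.integrableOn_Icc)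
  rwa [uIcc_of_le zero_le_one] at h

theorem Gam_sub_mg_mul_eq_integral {γ : ℝ → ℝ} (hγ : ContinuousOn γ (Icc 0 1)) {v : ℝ}
    (hv : v ∈ Icc (0 : ℝ) 1) : Gam γ v - mg γ * v = ∫ t in v..1, (mg γ - γ t) := by
  have hint : ∀ a b, 0 ≤ a → a ≤ b → b ≤ 1 → IntervalIntegrable γ volume a b :=
    fun a b ha hab hb =>
      (hγ.mono (by rw [uIcc_of_le hab]; exact Icc_subset_Icc ha hb)).intervalIntegrable
  have hadd : Gam γ v + ∫ t in v..1, γ t = mg γ :=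
    intervalIntegral.integral_add_adjacent_intervals (hint 0 v le_rfl hv.1 hv.2)
      (hint v 1 hv.1 hv.2 le_rfl)
  rw [intervalIntegral.integral_sub intervalIntegrable_const (hint v 1 hv.1 hv.2 le_rfl),
    intervalIntegral.integral_const, smul_eq_mul]
  linarith

theorem mul_one_sub_le_Gam_sub_mg_mul {γ : ℝ → ℝ} (hγ : ContinuousOn γ (Icc 0 1))
    {v c : ℝ} (hv : v ∈ Icc (0 : ℝ) 1) (hc : ∀ t ∈ Icc v 1, γ t ≤ c) :
    (mg γ - c) * (1 - v) ≤ Gam γ v - mg γ * v := by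
  have hint : IntervalIntegrable (fun t => mg γ - γ t) volume v 1 :=
    intervalIntegrable_const.sub
      (hγ.mono (by rw [uIcc_of_le hv.2]; exact Icc_subset_Icc hv.1 le_rfl)).intervalIntegrable
  have h := intervalIntegral.integral_mono_on hv.2 intervalIntegrable_const hint
    fun t ht => sub_le_sub_left (hc t ht) (mg γ)
  rwa [intervalIntegral.integral_const, smul_eq_mul, mul_comm,
    ← Gam_sub_mg_mul_eq_integral hγ hv] at h

noncomputable def psiDensity (γ σ2 : ℝ → ℝ) (v : ℝ) : ℝ :=
  σ2 v / (2 * (Gam γ v - mg γ * v))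

theorem continuousOn_psiDensity {γ σ2 : ℝ → ℝ} (hγ : ContinuousOn γ (Icc 0 1))
    (hσ : ContinuousOn σ2 (Icc 0 1)) (hE1 : ∀ u ∈ Ioo (0 : ℝ) 1, 0 < Gam γ u - mg γ * u) :
    ContinuousOn (psiDensity γ σ2) (Ioo 0 1) :=
  (hσ.mono Ioo_subset_Icc_self).div
    (continuousOn_const.mul (((continuousOn_Gam hγ).sub (continuousOn_const.mul
      continuousOn_id)).mono Ioo_subset_Icc_self))
    fun v hv => by have := hE1 v hv; positivity

theorem intervalIntegrable_psiDensity {γ σ2 : ℝ → ℝ} (hγ : ContinuousOn γ (Icc 0 1))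
    (hσ : ContinuousOn σ2 (Icc 0 1)) (hE1 : ∀ u ∈ Ioo (0 : ℝ) 1, 0 < Gam γ u - mg γ * u)
    {a b : ℝ} (ha : a ∈ Ioo (0 : ℝ) 1) (hb : b ∈ Ioo (0 : ℝ) 1) :
    IntervalIntegrable (psiDensity γ σ2) volume a b :=
  ((continuousOn_psiDensity hγ hσ hE1).mono
    (ordConnected_Ioo.uIcc_subset ha hb)).intervalIntegrable

theorem Psi_sub_Psi {γ σ2 : ℝ → ℝ} (hγ : ContinuousOn γ (Icc 0 1))
    (hσ : ContinuousOn σ2 (Icc 0 1)) (hE1 : ∀ u ∈ Ioo (0 : ℝ) 1, 0 < Gam γ u - mg γ * u)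
    {a b : ℝ} (ha : a ∈ Ioo (0 : ℝ) 1) (hb : b ∈ Ioo (0 : ℝ) 1) :
    Psi γ σ2 b - Psi γ σ2 a = ∫ v in a..b, psiDensity γ σ2 v :=
  have hhalf : (1 / 2 : ℝ) ∈ Ioo (0 : ℝ) 1 := by norm_num
  intervalIntegral.integral_interval_sub_left (intervalIntegrable_psiDensity hγ hσ hE1 hhalf hb)
    (intervalIntegrable_psiDensity hγ hσ hE1 hhalf ha)

theorem monotoneOn_Psi {γ σ2 : ℝ → ℝ} (hγ : ContinuousOn γ (Icc 0 1))
    (hσ : ContinuousOn σ2 (Icc 0 1)) (hUE : ∀ u ∈ Icc (0 : ℝ) 1, 0 < σ2 u)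
    (hE1 : ∀ u ∈ Ioo (0 : ℝ) 1, 0 < Gam γ u - mg γ * u) :
    MonotoneOn (Psi γ σ2) (Ioo 0 1) := fun a ha b hb hab => by
  rw [← sub_nonneg, Psi_sub_Psi hγ hσ hE1 ha hb]
  refine intervalIntegral.integral_nonneg hab fun v hv => ?_
  have hv' : v ∈ Ioo (0 : ℝ) 1 := ⟨ha.1.trans_le hv.1, hv.2.trans_lt hb.2⟩
  have := hE1 v hv'
  have := hUE v (Ioo_subset_Icc_self hv')
  unfold psiDensity
  positivity

theorem psiDensity_le_div_mul_inv_one_sub {γ σ2 : ℝ → ℝ} (hγ : ContinuousOn γ (Icc 0 1))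
    {v s c : ℝ} (hv : v ∈ Ioo (0 : ℝ) 1) (hs : 0 ≤ s) (hσv : σ2 v ≤ s) (hc : c < mg γ)
    (hγv : ∀ t ∈ Icc v 1, γ t ≤ c) :
    psiDensity γ σ2 v ≤ s / (2 * (mg γ - c)) * (1 - v)⁻¹ := by
  have hD := mul_one_sub_le_Gam_sub_mg_mul hγ (Ioo_subset_Icc_self hv) hγv
  have hpos : 0 < (mg γ - c) * (1 - v) := mul_pos (by linarith) (by linarith [hv.2])
  calc psiDensity γ σ2 v ≤ s / (2 * ((mg γ - c) * (1 - v))) :=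
        div_le_div₀ hs hσv (by positivity) (by linarith)
    _ = s / (2 * (mg γ - c)) * (1 - v)⁻¹ := by rw [← mul_assoc, ← div_div, div_eq_mul_inv]

theorem exists_mul_psiDensity_le_mul_inv_one_sub {γ σ2 : ℝ → ℝ}
    (hγ : ContinuousOn γ (Icc 0 1)) (hσ : ContinuousOn σ2 (Icc 0 1)) (hσ1 : 0 < σ2 1)
    {p : ℝ} (hp : 0 ≤ p) (hpp : p < pcrit γ σ2) :
    ∃ β, 0 ≤ β ∧ β < 1 ∧ ∃ a ∈ Ioo (0 : ℝ) 1,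
      ∀ v ∈ Ico a 1, p * psiDensity γ σ2 v ≤ β * (1 - v)⁻¹ := by
  rw [pcrit, lt_div_iff₀ hσ1] at hpp
  -- `t` is small enough that `p * (σ2 1 + t) < 2 * (mg γ - (γ 1 + t))` still holds
  set t := (2 * (mg γ - γ 1) - p * σ2 1) / (2 * (p + 2)) with ht
  have htpos : 0 < t := div_pos (by linarith) (by linarith)
  have htle : (p + 2) * t < 2 * (mg γ - γ 1) - p * σ2 1 := by
    have : (p + 2) * t = (2 * (mg γ - γ 1) - p * σ2 1) / 2 := by
      rw [ht]; field_simp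
    linarith
  have hgap : 0 < mg γ - (γ 1 + t) := by nlinarith
  refine ⟨p * ((σ2 1 + t) / (2 * (mg γ - (γ 1 + t)))), by positivity, ?_, ?_⟩
  · rw [mul_div_assoc', div_lt_one (by positivity)]
    nlinarith
  obtain ⟨a, ha1, hsub⟩ := mem_nhdsLE_iff_exists_Icc_subset.mp
    (((eventually_nhdsLE_lt_of_continuousOn one_pos hσ (lt_add_of_pos_right _ htpos)).and
      (eventually_nhdsLE_lt_of_continuousOn one_pos hγ (lt_add_of_pos_right _ htpos))).and
      (eventually_nhdsWithin_of_eventually_nhds (eventually_gt_nhds (by norm_num : (0 : ℝ) < 1))))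
  have ha0 : 0 < a := (hsub (left_mem_Icc.mpr ha1.le)).2
  refine ⟨a, ⟨ha0, ha1⟩, fun v hv => ?_⟩
  have hv' : v ∈ Ioo (0 : ℝ) 1 := ⟨ha0.trans_le hv.1, hv.2⟩
  rw [mul_assoc]
  refine mul_le_mul_of_nonneg_left (psiDensity_le_div_mul_inv_one_sub hγ hv' (by positivity)
    (hsub ⟨hv.1, hv.2.le⟩).1.1.le (by linarith) fun s hs => ?_) hp
  exact (hsub ⟨hv.1.trans hs.1, hs.2⟩).1.2.le

theorem stmt7_general (γ σ2 : ℝ → ℝ) (hγc : ContinuousOn γ (Set.Icc 0 1))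
    (hσc : ContinuousOn σ2 (Set.Icc 0 1)) (hUE : ∀ u ∈ Set.Icc (0:ℝ) 1, 0 < σ2 u)
    (hE1 : ∀ u ∈ Set.Ioo (0:ℝ) 1, 0 < Gam γ u - mg γ * u) :
    ∀ p : ℝ, 0 ≤ p → p < pcrit γ σ2 →
      (∫⁻ u in Set.Ioo (0:ℝ) 1, ENNReal.ofReal (Real.exp (p * Psi γ σ2 u))) < ⊤ := by
  intro p hp hpp
  obtain ⟨β, hβ0, hβ1, a, ha, hdens⟩ :=
    exists_mul_psiDensity_le_mul_inv_one_sub hγc hσc (hUE 1 (right_mem_Icc.mpr zero_le_one))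
      hp hpp
  refine lintegral_exp_lt_top_of_le_sub_mul_log (C := p * Psi γ σ2 a) hβ1 fun u hu => ?_
  have hlog : β * log (1 - u) ≤ 0 :=
    mul_nonpos_of_nonneg_of_nonpos hβ0 (log_nonpos (by linarith [hu.2]) (by linarith [hu.1]))
  rcases le_total u a with hua | hau
  · nlinarith [monotoneOn_Psi hγc hσc hUE hE1 hu ha hua]
  · have htail := integral_le_neg_mul_log_one_sub ha.1.le hau hu.2 hβ0
      ((intervalIntegrable_psiDensity hγc hσc hE1 ha hu).const_mul p)
      fun v hv => hdens v ⟨hv.1, hv.2.trans_lt hu.2⟩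
    rw [intervalIntegral.integral_const_mul, ← Psi_sub_Psi hγc hσc hE1 ha hu] at htail
    linarith

/-- under (UE) and (E1), if p_c > 0 then for every 0 ≤ p < p_c,
Z̄^p = ∫₀¹ exp(p Ψ(u)) du < +∞. -/
theorem stmt7 (γ σ2 : ℝ → ℝ) (hγc : ContinuousOn γ (Set.Icc 0 1))
    (hσc : ContinuousOn σ2 (Set.Icc 0 1)) (hUE : ∀ u ∈ Set.Icc (0:ℝ) 1, 0 < σ2 u)
    (hE1 : ∀ u ∈ Set.Ioo (0:ℝ) 1, 0 < Gam γ u - mg γ * u)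
    (hpc : 0 < pcrit γ σ2) :
    ∀ p : ℝ, 0 ≤ p → p < pcrit γ σ2 →
      (∫⁻ u in Set.Ioo (0:ℝ) 1, ENNReal.ofReal (Real.exp (p * Psi γ σ2 u))) < ⊤ :=
  stmt7_general γ σ2 hγc hσc hUE hE1
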